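/- arXiv:2509.06726 — 5 statements merged into one kernel-verified Lean document; each statement's English description precedes it below -/
import Mathlib

section
/- Let n ≥ 1 be an integer, ω ∈ [0,1], and set N = 2^n. For each x : Fin n → Bool define the real vector Ψ_x : (Fin n → Bool) → ℝ by Ψ_x(v) = √(1−ω) if v is the all-zero string, and Ψ_x(v) = (−1)^{Σᵢ xᵢ·vᵢ} · √(ω/(N−1)) otherwise; define φ_b : (Fin n → Bool) → ℝ by φ_b(v) = (−1)^{Σᵢ bᵢ·vᵢ} / √N. Then: (i) every Ψ_x is a unit vector; (ii) Ψ_x evaluated at the all-zero string squares to 1−ω (so the vacuum component equals 1−ω and the energy constraint Tr[HΨ_xΨ_x*] = ω is saturated); (iii) each φ_b factorizes as the n-fold product φ_b(v) = Πᵢ ((−1)^{bᵢ·vᵢ}/√2), i.e. it is a product (separable) vector across the n parties; and (iv) the average success probability (1/N) Σ_x ⟨φ_x, Ψ_x⟩² equals 2^{−n}·(√((2^n−1)·ω) + √(1−ω))². In particular, entangled preparations with local projective measurements onto |±⟩ achieve the maximal energy-restricted state-discrimination probability pEnt(ω,n). -/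
/-
Off the vacuum, `φ_x` and `Ψ_x` carry the same character `(−1)^{x·v}`, so every one of the
`2^n − 1` non-vacuum terms of `⟨φ_x, Ψ_x⟩` equals `√(ω/(2^n−1)) / √(2^n)`, while the vacuum
contributes `√(1−ω) / √(2^n)`. Hence `⟨φ_x, Ψ_x⟩ = (√((2^n−1)ω) + √(1−ω)) / √(2^n)` for every `x`,
and averaging its square over the `2^n` strings gives `pEnt(ω,n)`. The same bookkeeping with
squared amplitudes shows that `Ψ_x` is a unit vector.
-/

open Finset

/-- The entangled preparation `Ψ_x`: amplitude `√(1−ω)` on the vacuum (all-zero string),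
and `(−1)^{x·v} √(ω/(2^n−1))` on every other string `v`. -/
noncomputable def distPsi (n : ℕ) (ω : ℝ) (x : Fin n → Bool) : (Fin n → Bool) → ℝ :=
  fun v =>
    if v = (fun _ => false) then Real.sqrt (1 - ω)
    else (-1 : ℝ) ^ (∑ i, if x i ∧ v i then 1 else 0 : ℕ) * Real.sqrt (ω / ((2 : ℝ) ^ n - 1))

/-- The measurement vector `φ_b(v) = (−1)^{b·v} / √(2^n)`. -/
noncomputable def distPhi (n : ℕ) (b : Fin n → Bool) : (Fin n → Bool) → ℝ :=
  fun v => (-1 : ℝ) ^ (∑ i, if b i ∧ v i then 1 else 0 : ℕ) / Real.sqrt ((2 : ℝ) ^ n)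

lemma neg_one_pow_mul_self {R : Type*} [Monoid R] [HasDistribNeg R] (k : ℕ) :
    (-1 : R) ^ k * (-1) ^ k = 1 := by
  rw [← pow_add, ← two_mul, pow_mul, neg_one_sq, one_pow]

lemma Real.sqrt_pow {x : ℝ} (hx : 0 ≤ x) (n : ℕ) : √(x ^ n) = √x ^ n := by
  rw [Real.sqrt_eq_iff_eq_sq (pow_nonneg hx n) (pow_nonneg (Real.sqrt_nonneg x) n), ← pow_mul,
    mul_comm, pow_mul, Real.sq_sqrt hx]

lemma Real.mul_sqrt_div_self {a : ℝ} (ha : 0 ≤ a) (b : ℝ) : a * √(b / a) = √(a * b) := by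
  rw [Real.sqrt_div' b ha, Real.sqrt_mul ha, mul_div_left_comm, Real.div_sqrt, mul_comm]

lemma Fintype.sum_eq_add_of_eq_off {α R : Type*} [Fintype α] [DecidableEq α] [Ring R]
    (a : α) (f : α → R) (c : R) (hf : ∀ v, v ≠ a → f v = c) :
    ∑ v, f v = f a + ((Fintype.card α : R) - 1) * c := by
  have hoff : ∑ v ∈ univ.erase a, f v = ∑ _v ∈ univ.erase a, c :=
    Finset.sum_congr rfl fun v hv => hf v (ne_of_mem_erase hv)
  rw [← add_sum_erase _ _ (mem_univ a), hoff, sum_const, nsmul_eq_mul,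
    card_erase_of_mem (mem_univ a), card_univ, Nat.cast_sub (Fintype.card_pos_iff.2 ⟨a⟩),
    Nat.cast_one]

lemma card_bitstrings (n : ℕ) : (Fintype.card (Fin n → Bool) : ℝ) = 2 ^ n := by
  simp

section Strategy

variable {n : ℕ} {ω : ℝ}

lemma distPsi_vacuum (x : Fin n → Bool) : distPsi n ω x (fun _ => false) = √(1 - ω) :=
  if_pos rfl

lemma distPsi_sq_of_ne (hω : 0 ≤ ω) (x : Fin n → Bool) {v : Fin n → Bool}
    (hv : v ≠ fun _ => false) : distPsi n ω x v ^ 2 = ω / (2 ^ n - 1) := by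
  have hN : (0 : ℝ) ≤ 2 ^ n - 1 := sub_nonneg.2 (one_le_pow₀ one_le_two)
  rw [distPsi, if_neg hv, mul_pow, sq, neg_one_pow_mul_self, one_mul,
    Real.sq_sqrt (div_nonneg hω hN)]

lemma distPhi_mul_distPsi_vacuum (x : Fin n → Bool) :
    distPhi n x (fun _ => false) * distPsi n ω x (fun _ => false) = √(1 - ω) / √(2 ^ n) := by
  simp [distPhi, distPsi_vacuum, div_eq_inv_mul]

lemma distPhi_mul_distPsi_of_ne (x : Fin n → Bool) {v : Fin n → Bool}
    (hv : v ≠ fun _ => false) :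
    distPhi n x v * distPsi n ω x v = √(ω / (2 ^ n - 1)) / √(2 ^ n) := by
  rw [distPhi, distPsi, if_neg hv, div_mul_eq_mul_div, ← mul_assoc, neg_one_pow_mul_self,
    one_mul]

theorem sum_distPsi_sq (hn : 1 ≤ n) (hω : ω ∈ Set.Icc (0 : ℝ) 1) (x : Fin n → Bool) :
    ∑ v, distPsi n ω x v ^ 2 = 1 := by
  have hN : (2 : ℝ) ^ n - 1 ≠ 0 :=
    sub_ne_zero.2 (one_lt_pow₀ one_lt_two (by omega)).ne'
  rw [Fintype.sum_eq_add_of_eq_off _ _ _ fun v hv => distPsi_sq_of_ne hω.1 x hv,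
    distPsi_vacuum, Real.sq_sqrt (sub_nonneg.2 hω.2), card_bitstrings, mul_div_cancel₀ _ hN]
  ring

theorem inner_distPhi_distPsi (x : Fin n → Bool) :
    ∑ v, distPhi n x v * distPsi n ω x v = (√((2 ^ n - 1) * ω) + √(1 - ω)) / √(2 ^ n) := by
  have hN : (0 : ℝ) ≤ 2 ^ n - 1 := sub_nonneg.2 (one_le_pow₀ one_le_two)
  rw [Fintype.sum_eq_add_of_eq_off _ _ _ fun v hv => distPhi_mul_distPsi_of_ne x hv,
    distPhi_mul_distPsi_vacuum, card_bitstrings, ← mul_div_assoc, Real.mul_sqrt_div_self hN]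
  ring

theorem distPhi_eq_prod (b v : Fin n → Bool) :
    distPhi n b v = ∏ i, ((-1 : ℝ) ^ (if b i ∧ v i then 1 else 0 : ℕ) / √2) := by
  rw [prod_div_distrib, prod_pow_eq_pow_sum, prod_const, card_univ, Fintype.card_fin,
    ← Real.sqrt_pow zero_le_two, distPhi]

end Strategy

theorem entangled_strategy_attains_pEnt (n : ℕ) (hn : 1 ≤ n) (ω : ℝ)
    (hω : ω ∈ Set.Icc (0 : ℝ) 1) :
    -- (i) every Ψ_x is a unit vector
    (∀ x : Fin n → Bool, ∑ v : Fin n → Bool, (distPsi n ω x v) ^ 2 = 1) ∧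
    -- (ii) the vacuum component of every Ψ_x equals 1 − ω (energy constraint saturated)
    (∀ x : Fin n → Bool, (distPsi n ω x (fun _ => false)) ^ 2 = 1 - ω) ∧
    -- (iii) each φ_b is a product (separable) vector across the n parties
    (∀ b v : Fin n → Bool,
      distPhi n b v =
        ∏ i : Fin n, ((-1 : ℝ) ^ (if b i ∧ v i then 1 else 0 : ℕ) / Real.sqrt 2)) ∧
    -- (iv) the average success probability equals pEnt(ω,n)
    ((1 / (2 : ℝ) ^ n) * ∑ x : Fin n → Bool,
        (∑ v : Fin n → Bool, distPhi n x v * distPsi n ω x v) ^ 2 =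
      (1 / (2 : ℝ) ^ n) *
        (Real.sqrt (((2 : ℝ) ^ n - 1) * ω) + Real.sqrt (1 - ω)) ^ 2) := by
  refine ⟨sum_distPsi_sq hn hω,
    fun x => by rw [distPsi_vacuum, Real.sq_sqrt (sub_nonneg.2 hω.2)], distPhi_eq_prod, ?_⟩
  have hN : (0 : ℝ) < 2 ^ n := by positivity
  simp_rw [inner_distPhi_distPsi, sum_const, card_univ, nsmul_eq_mul, card_bitstrings, div_pow,
    Real.sq_sqrt hN.le, mul_div_cancel₀ _ hN.ne']
end

section
/- Let d ≥ 2, let e₀ be a fixed unit vector in ℂ^d, let s ∈ [1/2, 1], and let ψ₀, ψ₁ be unit vectors in ℂ^d satisfying |⟨e₀, ψ₀⟩|² ≥ s and |⟨e₀, ψ₁⟩|² ≥ s. Then for any positive-semidefinite operators M₀, M₁ on ℂ^d with M₀ + M₁ = I, the discrimination probability satisfies (1/2)(⟨ψ₀, M₀ψ₀⟩ + ⟨ψ₁, M₁ψ₁⟩) ≤ 1/2 + √(s(1−s)). -/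
/-!
Let `a` and `b` be the probabilities that `M₀` fires on `ψ₀` and on `ψ₁`. Writing `M₀ = S₀†S₀`,
`M₁ = S₁†S₁` and splitting `⟪ψ₀, ψ₁⟫ = ⟪S₀ψ₀, S₀ψ₁⟫ + ⟪S₁ψ₀, S₁ψ₁⟫`, Cauchy–Schwarz bounds the
overlap by the fidelity `√(ab) + √((1-a)(1-b))`, and this forces
`(a - b)² ≤ 1 - |⟪ψ₀, ψ₁⟫|²` (Helstrom). On the other hand both states lie close to `e₀`: splitting
them along `e₀` and its orthogonal complement gives `|⟪ψ₀, ψ₁⟫| ≥ s - (1 - s)`. Hence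
`a - b ≤ √(1 - (2s - 1)²) = 2√(s(1 - s))`.
-/

open scoped ComplexInnerProductSpace InnerProductSpace
open ComplexConjugate

section RankOneSplitting

variable {𝕜 E : Type*} [RCLike 𝕜] [NormedAddCommGroup E] [InnerProductSpace 𝕜 E] {e : E}

theorem inner_sub_inner_smul_eq_zero (he : ‖e‖ = 1) (x : E) : ⟪e, x - ⟪e, x⟫_𝕜 • e⟫_𝕜 = 0 := by
  rw [inner_sub_right, inner_smul_right, inner_self_eq_norm_sq_to_K, he]
  simp

theorem norm_sub_inner_smul_sq (he : ‖e‖ = 1) (x : E) :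
    ‖x - ⟪e, x⟫_𝕜 • e‖ ^ 2 = ‖x‖ ^ 2 - ‖⟪e, x⟫_𝕜‖ ^ 2 := by
  have horth : ⟪⟪e, x⟫_𝕜 • e, x - ⟪e, x⟫_𝕜 • e⟫_𝕜 = 0 := by
    rw [inner_smul_left, inner_sub_inner_smul_eq_zero he, mul_zero]
  have := norm_add_sq_eq_norm_sq_add_norm_sq_of_inner_eq_zero _ _ horth
  rw [add_sub_cancel, norm_smul, he, mul_one] at this
  linarith

theorem inner_eq_conj_mul_add_inner_sub_inner_smul (he : ‖e‖ = 1) (x y : E) :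
    ⟪x, y⟫_𝕜 = conj ⟪e, x⟫_𝕜 * ⟪e, y⟫_𝕜 + ⟪x - ⟪e, x⟫_𝕜 • e, y - ⟪e, y⟫_𝕜 • e⟫_𝕜 := by
  rw [inner_sub_left, inner_smul_left, inner_sub_inner_smul_eq_zero he, mul_zero, sub_zero,
    inner_sub_right, inner_smul_right, ← inner_conj_symm x e]
  ring

theorem two_mul_sub_one_le_norm_inner {x y : E} {s : ℝ} (he : ‖e‖ = 1) (hx : ‖x‖ = 1)
    (hy : ‖y‖ = 1) (hsx : s ≤ ‖⟪e, x⟫_𝕜‖ ^ 2) (hsy : s ≤ ‖⟪e, y⟫_𝕜‖ ^ 2) :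
    2 * s - 1 ≤ ‖⟪x, y⟫_𝕜‖ := by
  set rx := x - ⟪e, x⟫_𝕜 • e
  set ry := y - ⟪e, y⟫_𝕜 • e
  have hrx : ‖rx‖ ^ 2 = 1 - ‖⟪e, x⟫_𝕜‖ ^ 2 := by rw [norm_sub_inner_smul_sq he, hx, one_pow]
  have hry : ‖ry‖ ^ 2 = 1 - ‖⟪e, y⟫_𝕜‖ ^ 2 := by rw [norm_sub_inner_smul_sq he, hy, one_pow]
  have hsplit : ‖⟪e, x⟫_𝕜‖ * ‖⟪e, y⟫_𝕜‖ - ‖rx‖ * ‖ry‖ ≤ ‖⟪x, y⟫_𝕜‖ := by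
    have hcs := norm_inner_le_norm (𝕜 := 𝕜) rx ry
    have htri := norm_sub_le (conj ⟪e, x⟫_𝕜 * ⟪e, y⟫_𝕜 + ⟪rx, ry⟫_𝕜) ⟪rx, ry⟫_𝕜
    rw [add_sub_cancel_right, norm_mul, RCLike.norm_conj,
      ← inner_eq_conj_mul_add_inner_sub_inner_smul he] at htri
    linarith
  have hr : ‖rx‖ * ‖ry‖ ≤ 1 - s := by nlinarith [sq_nonneg (‖rx‖ - ‖ry‖)]
  have hc : s ≤ ‖⟪e, x⟫_𝕜‖ * ‖⟪e, y⟫_𝕜‖ := by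
    rcases le_total ‖⟪e, x⟫_𝕜‖ ‖⟪e, y⟫_𝕜‖ with h | h
    · nlinarith [norm_nonneg ⟪e, x⟫_𝕜]
    · nlinarith [norm_nonneg ⟪e, y⟫_𝕜]
  linarith

end RankOneSplitting

theorem sq_sub_add_sq_sqrt_mul_add_sqrt_mul_le_one {a b : ℝ} (ha₀ : 0 ≤ a) (ha₁ : a ≤ 1)
    (hb₀ : 0 ≤ b) (hb₁ : b ≤ 1) :
    (a - b) ^ 2 + (√a * √b + √(1 - a) * √(1 - b)) ^ 2 ≤ 1 := by
  have ha := Real.sq_sqrt ha₀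
  have hb := Real.sq_sqrt hb₀
  have ha' := Real.sq_sqrt (sub_nonneg.mpr ha₁)
  have hb' := Real.sq_sqrt (sub_nonneg.mpr hb₁)
  set p := √a
  set q := √b
  set p' := √(1 - a)
  set q' := √(1 - b)
  have hdiff : a - b = (p * q' - q * p') * (p * q' + q * p') := by
    linear_combination (-p ^ 2) * hb' + q ^ 2 * ha' - (1 - b) * ha + (1 - a) * hb
  have hfid : (p * q + p' * q') ^ 2 + (p * q' - q * p') ^ 2 = 1 := by
    linear_combination (q ^ 2 + q' ^ 2) * (ha + ha') + (hb + hb')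
  have hle : (p * q' + q * p') ^ 2 ≤ 1 := by
    nlinarith [sq_nonneg (p * q - p' * q')]
  rw [hdiff, mul_pow]
  nlinarith [mul_le_mul_of_nonneg_left hle (sq_nonneg (p * q' - q * p'))]

theorem ContinuousLinearMap.IsPositive.exists_inner_apply_eq {E : Type*} [NormedAddCommGroup E]
    [InnerProductSpace ℂ E] [CompleteSpace E] {T : E →L[ℂ] E} (hT : T.IsPositive) :
    ∃ S : E →L[ℂ] E, ∀ x y, ⟪x, T y⟫ = ⟪S x, S y⟫ := by
  obtain ⟨S, rfl⟩ := CStarAlgebra.nonneg_iff_eq_star_mul_self.mp ((nonneg_iff_isPositive T).mpr hT)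
  exact ⟨S, fun x y => by simp [star_eq_adjoint, adjoint_inner_right]⟩

theorem ContinuousLinearMap.IsPositive.norm_inner_apply_le {E : Type*} [NormedAddCommGroup E]
    [InnerProductSpace ℂ E] [CompleteSpace E] {T : E →L[ℂ] E} (hT : T.IsPositive) (x y : E) :
    ‖⟪x, T y⟫‖ ≤ √(⟪x, T x⟫).re * √(⟪y, T y⟫).re := by
  obtain ⟨S, hS⟩ := hT.exists_inner_apply_eq
  simp only [hS, ← RCLike.re_to_complex, ← norm_eq_sqrt_re_inner]
  exact norm_inner_le_norm _ _

section TwoOutcomeMeasurement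

variable {E : Type*} [NormedAddCommGroup E] [InnerProductSpace ℂ E] {M₀ M₁ : E →L[ℂ] E}

theorem re_inner_apply_add_re_inner_apply (hsum : M₀ + M₁ = 1) (x : E) :
    (⟪x, M₀ x⟫).re + (⟪x, M₁ x⟫).re = ‖x‖ ^ 2 := by
  rw [← Complex.add_re, ← inner_add_right, ← add_apply, hsum, one_apply_eq_self,
    inner_self_eq_norm_sq_to_K]
  norm_cast

theorem norm_inner_le_of_add_eq_one [CompleteSpace E] (hM₀ : M₀.IsPositive)
    (hM₁ : M₁.IsPositive) (hsum : M₀ + M₁ = 1) (x y : E) :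
    ‖⟪x, y⟫‖ ≤ √(⟪x, M₀ x⟫).re * √(⟪y, M₀ y⟫).re + √(⟪x, M₁ x⟫).re * √(⟪y, M₁ y⟫).re := by
  have hy : M₀ y + M₁ y = y := by rw [← add_apply, hsum, one_apply_eq_self]
  calc ‖⟪x, y⟫‖ = ‖⟪x, M₀ y⟫ + ⟪x, M₁ y⟫‖ := by rw [← inner_add_right, hy]
    _ ≤ ‖⟪x, M₀ y⟫‖ + ‖⟪x, M₁ y⟫‖ := norm_add_le _ _
    _ ≤ _ := add_le_add (hM₀.norm_inner_apply_le x y) (hM₁.norm_inner_apply_le x y)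

theorem re_inner_apply_sub_le_sqrt_one_sub_norm_inner_sq [CompleteSpace E]
    (hM₀ : M₀.IsPositive) (hM₁ : M₁.IsPositive) (hsum : M₀ + M₁ = 1) {x y : E}
    (hx : ‖x‖ = 1) (hy : ‖y‖ = 1) :
    (⟪x, M₀ x⟫).re - (⟪y, M₀ y⟫).re ≤ √(1 - ‖⟪x, y⟫‖ ^ 2) := by
  have hx₁ : (⟪x, M₁ x⟫).re = 1 - (⟪x, M₀ x⟫).re := by
    linarith [hx ▸ re_inner_apply_add_re_inner_apply hsum x, one_pow (M := ℝ) 2]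
  have hy₁ : (⟪y, M₁ y⟫).re = 1 - (⟪y, M₀ y⟫).re := by
    linarith [hy ▸ re_inner_apply_add_re_inner_apply hsum y, one_pow (M := ℝ) 2]
  have hfid := norm_inner_le_of_add_eq_one hM₀ hM₁ hsum x y
  rw [hx₁, hy₁] at hfid
  have hx₀ : 0 ≤ (⟪x, M₀ x⟫).re := hM₀.re_inner_nonneg_right x
  have hy₀ : 0 ≤ (⟪y, M₀ y⟫).re := hM₀.re_inner_nonneg_right y
  have hx₁_nonneg : 0 ≤ (⟪x, M₁ x⟫).re := hM₁.re_inner_nonneg_right x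
  have hy₁_nonneg : 0 ≤ (⟪y, M₁ y⟫).re := hM₁.re_inner_nonneg_right y
  have harith := sq_sub_add_sq_sqrt_mul_add_sqrt_mul_le_one hx₀ (by linarith) hy₀ (by linarith)
  refine (le_abs_self _).trans (Real.abs_le_sqrt ?_)
  nlinarith [pow_le_pow_left₀ (norm_nonneg _) hfid 2]

end TwoOutcomeMeasurement

theorem energy_restricted_two_state_discrimination_bound_general
    (d : ℕ)
    (e0 ψ0 ψ1 : EuclideanSpace ℂ (Fin d))
    (he0 : ‖e0‖ = 1) (hψ0 : ‖ψ0‖ = 1) (hψ1 : ‖ψ1‖ = 1)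
    (s : ℝ) (hs : s ∈ Set.Icc (1 / 2 : ℝ) 1)
    (h0 : s ≤ ‖⟪e0, ψ0⟫‖ ^ 2) (h1 : s ≤ ‖⟪e0, ψ1⟫‖ ^ 2)
    (M0 M1 : EuclideanSpace ℂ (Fin d) →L[ℂ] EuclideanSpace ℂ (Fin d))
    (hM0 : M0.IsPositive) (hM1 : M1.IsPositive) (hsum : M0 + M1 = 1) :
    (1 / 2) * ((⟪ψ0, M0 ψ0⟫).re + (⟪ψ1, M1 ψ1⟫).re) ≤
      1 / 2 + Real.sqrt (s * (1 - s)) := by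
  have hoverlap := two_mul_sub_one_le_norm_inner he0 hψ0 hψ1 h0 h1
  have hHelstrom := re_inner_apply_sub_le_sqrt_one_sub_norm_inner_sq hM0 hM1 hsum hψ0 hψ1
  have hψ1M1 := hψ1 ▸ re_inner_apply_add_re_inner_apply hsum ψ1
  have hbound : √(1 - ‖⟪ψ0, ψ1⟫‖ ^ 2) ≤ 2 * √(s * (1 - s)) := by
    rw [← Real.sqrt_sq zero_le_two, ← Real.sqrt_mul (by norm_num)]
    refine Real.sqrt_le_sqrt ?_
    nlinarith [pow_le_pow_left₀ (by linarith [hs.1]) hoverlap 2]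
  linarith [one_pow (M := ℝ) 2]

theorem energy_restricted_two_state_discrimination_bound
    (d : ℕ) (hd : 2 ≤ d)
    (e0 ψ0 ψ1 : EuclideanSpace ℂ (Fin d))
    (he0 : ‖e0‖ = 1) (hψ0 : ‖ψ0‖ = 1) (hψ1 : ‖ψ1‖ = 1)
    (s : ℝ) (hs : s ∈ Set.Icc (1 / 2 : ℝ) 1)
    (h0 : s ≤ ‖⟪e0, ψ0⟫‖ ^ 2) (h1 : s ≤ ‖⟪e0, ψ1⟫‖ ^ 2)
    (M0 M1 : EuclideanSpace ℂ (Fin d) →L[ℂ] EuclideanSpace ℂ (Fin d))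
    (hM0 : M0.IsPositive) (hM1 : M1.IsPositive) (hsum : M0 + M1 = 1) :
    (1 / 2) * ((⟪ψ0, M0 ψ0⟫).re + (⟪ψ1, M1 ψ1⟫).re) ≤
      1 / 2 + Real.sqrt (s * (1 - s)) :=
  energy_restricted_two_state_discrimination_bound_general d e0 ψ0 ψ1 he0 hψ0 hψ1 s hs h0 h1 M0 M1
    hM0 hM1 hsum
end

section
/- Let n ≥ 1 be an integer and ω ∈ [0, 1 − 2^{−n}], and set t = (1−ω)^{1/n} (so t ∈ [1/2, 1]). For every s : Fin n → ℝ with s_i ∈ [1/2, 1] for all i and Π_i s_i ≥ 1−ω, one has Π_i (1/2 + √(s_i(1−s_i))) ≤ (1/2 + √(t(1−t)))^n, with equality when s_i = t for all i. Consequently the maximal success probability of fully separable preparations in the n-party distributed discrimination game equals pSep(ω,n) (Result 2). -/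
/-!
Write `f(s) = 1/2 + √(s(1-s))` and `t = (1-ω)^{1/n}`. The elasticity `e(s) = -s f'(s) / f(s)`
is nondecreasing on `[1/2, 1)`, so for `β = e(t)` the function `s ↦ f(s) s^β` increases on
`[1/2, t]` and decreases on `[t, 1]`, i.e. `f(s) s^β ≤ f(t) t^β`. Multiplying over the parties,
`∏ f(sᵢ) · (∏ sᵢ)^β ≤ f(t)ⁿ t^{nβ}`, and `∏ sᵢ ≥ tⁿ` cancels the powers: `β` is the Lagrange
multiplier of the energy constraint at the equal split. When `t = 1` the constraint forces
every `sᵢ = 1`.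
-/

open Finset Real

noncomputable def helstrom (s : ℝ) : ℝ := 1 / 2 + √(s * (1 - s))

/-- `-s f'(s) / f(s)` for `f = helstrom`. -/
noncomputable def helstromElasticity (s : ℝ) : ℝ :=
  s * (2 * s - 1) / (√(s * (1 - s)) * (1 + 2 * √(s * (1 - s))))

lemma helstromElasticity_nonneg {s : ℝ} (hs : 1 / 2 ≤ s) : 0 ≤ helstromElasticity s :=
  div_nonneg (by nlinarith) (by positivity)

lemma helstromElasticity_monotoneOn : MonotoneOn helstromElasticity (Set.Ico (1 / 2) 1) := by
  intro a ⟨ha, _⟩ b ⟨_, hb⟩ hab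
  have hsqrt : √(b * (1 - b)) ≤ √(a * (1 - a)) := sqrt_le_sqrt (by nlinarith)
  have hsqrt_pos : 0 < √(b * (1 - b)) := sqrt_pos.2 (by nlinarith)
  exact div_le_div₀ (by nlinarith) (by nlinarith) (by positivity)
    (mul_le_mul hsqrt (by linarith) (by positivity) (sqrt_nonneg _))

lemma hasDerivAt_helstrom {s : ℝ} (hs₀ : 0 < s) (hs₁ : s < 1) :
    HasDerivAt helstrom ((1 - 2 * s) / (2 * √(s * (1 - s)))) s := by
  have hinner : HasDerivAt (fun y : ℝ => y * (1 - y)) (1 - 2 * s) s :=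
    ((hasDerivAt_id' s).mul ((hasDerivAt_id' s).const_sub 1)).congr_deriv (by ring)
  have := ((hasDerivAt_sqrt (by nlinarith)).comp s hinner).const_add (1 / 2)
  exact this.congr_deriv (by ring)

lemma hasDerivAt_helstrom_mul_rpow (B : ℝ) {s : ℝ} (hs₀ : 0 < s) (hs₁ : s < 1) :
    HasDerivAt (fun y => helstrom y * y ^ B)
      (s ^ (B - 1) * helstrom s * (B - helstromElasticity s)) s := by
  have hq : 0 < √(s * (1 - s)) := sqrt_pos.2 (by nlinarith)
  refine ((hasDerivAt_helstrom hs₀ hs₁).mul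
    (hasDerivAt_rpow_const (Or.inl hs₀.ne'))).congr_deriv ?_
  rw [show s ^ B = s ^ (B - 1) * s by rw [← rpow_add_one hs₀.ne']; ring_nf]
  unfold helstrom helstromElasticity
  field_simp
  ring

lemma continuousOn_helstrom_mul_rpow {B : ℝ} (hB : 0 ≤ B) (D : Set ℝ) :
    ContinuousOn (fun y => helstrom y * y ^ B) D := by
  unfold helstrom
  exact Continuous.continuousOn (by fun_prop (disch := exact hB))

theorem helstrom_mul_rpow_le {t s : ℝ} (ht : t ∈ Set.Ico (1 / 2) 1)
    (hs : s ∈ Set.Icc (1 / 2) 1) :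
    helstrom s * s ^ helstromElasticity t ≤ helstrom t * t ^ helstromElasticity t := by
  set B := helstromElasticity t
  have hB : 0 ≤ B := helstromElasticity_nonneg ht.1
  set F' := fun x => x ^ (B - 1) * helstrom x * (B - helstromElasticity x)
  have hderiv : ∀ x ∈ Set.Ioo (1 / 2 : ℝ) 1, HasDerivAt (fun y => helstrom y * y ^ B) (F' x) x :=
    fun x hx => hasDerivAt_helstrom_mul_rpow B (by linarith [hx.1]) hx.2
  have hfactor_nonneg : ∀ x ∈ Set.Ioo (1 / 2 : ℝ) 1, 0 ≤ x ^ (B - 1) * helstrom x := fun x hx => by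
    have := hx.1; unfold helstrom; positivity
  rcases le_total s t with hst | hts
  · refine monotoneOn_of_hasDerivWithinAt_nonneg (convex_Icc (1 / 2) t) (f' := F')
      (continuousOn_helstrom_mul_rpow hB _) (fun x hx => ?_) (fun x hx => ?_)
      ⟨hs.1, hst⟩ ⟨ht.1, le_rfl⟩ hst
    all_goals rw [interior_Icc] at hx
    · exact (hderiv x ⟨hx.1, hx.2.trans ht.2⟩).hasDerivWithinAt
    · exact mul_nonneg (hfactor_nonneg x ⟨hx.1, hx.2.trans ht.2⟩) (sub_nonneg.2 <|
        helstromElasticity_monotoneOn ⟨hx.1.le, hx.2.trans ht.2⟩ ht hx.2.le)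
  · refine antitoneOn_of_hasDerivWithinAt_nonpos (convex_Icc t 1) (f' := F')
      (continuousOn_helstrom_mul_rpow hB _) (fun x hx => ?_) (fun x hx => ?_)
      ⟨le_rfl, ht.2.le⟩ ⟨hts, hs.2⟩ hts
    all_goals rw [interior_Icc] at hx
    · exact (hderiv x ⟨ht.1.trans_lt hx.1, hx.2⟩).hasDerivWithinAt
    · exact mul_nonpos_of_nonneg_of_nonpos (hfactor_nonneg x ⟨ht.1.trans_lt hx.1, hx.2⟩)
        (sub_nonpos.2 <| helstromElasticity_monotoneOn ht ⟨ht.1.trans hx.1.le, hx.2⟩ hx.1.le)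

theorem prod_le_pow_card_of_mul_rpow_le {ι : Type*} [Fintype ι] {a s : ι → ℝ} {c t B : ℝ}
    (ha : ∀ i, 0 ≤ a i) (hs : ∀ i, 0 ≤ s i) (ht : 0 < t) (hB : 0 ≤ B)
    (hbound : ∀ i, a i * s i ^ B ≤ c * t ^ B) (hprod : t ^ Fintype.card ι ≤ ∏ i, s i) :
    ∏ i, a i ≤ c ^ Fintype.card ι := by
  have hT : 0 < (t ^ Fintype.card ι) ^ B := by positivity
  refine le_of_mul_le_mul_right ?_ hT
  calc (∏ i, a i) * (t ^ Fintype.card ι) ^ B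
      ≤ (∏ i, a i) * (∏ i, s i) ^ B :=
        mul_le_mul_of_nonneg_left (rpow_le_rpow (by positivity) hprod hB)
          (prod_nonneg fun i _ => ha i)
    _ = ∏ i, a i * s i ^ B := by rw [← finsetProd_rpow _ _ (fun i _ => hs i), prod_mul_distrib]
    _ ≤ ∏ _i : ι, c * t ^ B := prod_le_prod (fun i _ => by have := ha i; have := hs i; positivity)
        fun i _ => hbound i
    _ = c ^ Fintype.card ι * (t ^ Fintype.card ι) ^ B := by
        rw [prod_const, card_univ, mul_pow, rpow_pow_comm ht.le]

lemma prod_le_single_of_le_one {ι : Type*} [Fintype ι] {s : ι → ℝ}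
    (hs : ∀ i, s i ∈ Set.Icc 0 1) (i : ι) : ∏ j, s j ≤ s i := by
  classical
  rw [← mul_prod_erase univ s (mem_univ i)]
  exact mul_le_of_le_one_right (hs i).1 (prod_le_one (fun j _ => (hs j).1) fun j _ => (hs j).2)

theorem prod_helstrom_le_pow_card {ι : Type*} [Fintype ι] {s : ι → ℝ} {t : ℝ}
    (hs : ∀ i, s i ∈ Set.Icc (1 / 2) 1) (ht : t ∈ Set.Icc (1 / 2) 1)
    (hprod : t ^ Fintype.card ι ≤ ∏ i, s i) :
    ∏ i, helstrom (s i) ≤ helstrom t ^ Fintype.card ι := by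
  rcases ht.2.lt_or_eq with ht₁ | rfl
  · exact prod_le_pow_card_of_mul_rpow_le (fun _ => by unfold helstrom; positivity)
      (fun i => by linarith [(hs i).1]) (by linarith [ht.1]) (helstromElasticity_nonneg ht.1)
      (fun i => helstrom_mul_rpow_le ⟨ht.1, ht₁⟩ (hs i)) hprod
  · have hs_one : ∀ i, s i = 1 := fun i => le_antisymm (hs i).2 <| by
      simpa using hprod.trans
        (prod_le_single_of_le_one (fun j => ⟨by linarith [(hs j).1], (hs j).2⟩) i)
    simp [hs_one]

lemma rpow_inv_natCast_mem_Icc {n : ℕ} (hn : n ≠ 0) {a x : ℝ} (ha : 0 ≤ a)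
    (hx : x ∈ Set.Icc (a ^ n) 1) : x ^ (n⁻¹ : ℝ) ∈ Set.Icc a 1 := by
  have hx₀ : 0 ≤ x := (pow_nonneg ha n).trans hx.1
  refine ⟨?_, rpow_le_one hx₀ hx.2 (by positivity)⟩
  calc a = (a ^ n) ^ (n⁻¹ : ℝ) := (pow_rpow_inv_natCast ha hn).symm
    _ ≤ x ^ (n⁻¹ : ℝ) := rpow_le_rpow (by positivity) hx.1 (by positivity)

theorem separable_bound_equal_split_optimal (n : ℕ) (hn : 1 ≤ n) (ω : ℝ)
    (hω : ω ∈ Set.Icc (0 : ℝ) (1 - 1 / (2 : ℝ) ^ n))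
    (t : ℝ) (ht : t = (1 - ω) ^ ((n : ℝ)⁻¹)) :
    -- t ∈ [1/2, 1]
    t ∈ Set.Icc (1 / 2 : ℝ) 1 ∧
    -- the product of per-party bounds is maximized by the equal split
    (∀ s : Fin n → ℝ, (∀ i, s i ∈ Set.Icc (1 / 2 : ℝ) 1) →
      1 - ω ≤ ∏ i, s i →
      ∏ i, (1 / 2 + Real.sqrt (s i * (1 - s i))) ≤
        (1 / 2 + Real.sqrt (t * (1 - t))) ^ n) ∧
    -- the equal split s_i = t is feasible (it saturates the energy constraint) ...
    t ^ n = 1 - ω ∧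
    -- ... and attains the bound, which equals pSep(ω,n)
    (∏ i : Fin n, (1 / 2 + Real.sqrt (t * (1 - t))) =
      (1 / 2 + Real.sqrt ((1 - ω) ^ ((n : ℝ)⁻¹)) *
        Real.sqrt (1 - (1 - ω) ^ ((n : ℝ)⁻¹))) ^ n) := by
  have hn₀ : n ≠ 0 := by omega
  have hω' : 1 - ω ∈ Set.Icc ((1 / 2 : ℝ) ^ n) 1 :=
    ⟨by rw [one_div_pow]; linarith [hω.2], by linarith [hω.1]⟩
  have ht_mem : t ∈ Set.Icc (1 / 2 : ℝ) 1 := ht ▸ rpow_inv_natCast_mem_Icc hn₀ (by norm_num) hω'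
  have ht_pow : t ^ n = 1 - ω :=
    ht ▸ rpow_inv_natCast_pow ((pow_nonneg (by norm_num) n).trans hω'.1) hn₀
  refine ⟨ht_mem, fun s hs hprod => ?_, ht_pow, ?_⟩
  · have := prod_helstrom_le_pow_card hs ht_mem (by rwa [Fintype.card_fin, ht_pow])
    rwa [Fintype.card_fin] at this
  · rw [prod_const, card_univ, Fintype.card_fin, sqrt_mul (by linarith [ht_mem.1]), ht]
end

section
/- Let N ≥ 2 be an integer. The function f_N(ω) := (1/N)·(√(ω(N−1)) + √(1−ω))² = (1/N)·(1 + (N−2)ω + 2√(ω(1−ω)(N−1))) is concave on [0,1]. -/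
/-- `f_N(ω) = (1/N)(√(ω(N−1)) + √(1−ω))²`, the maximal probability of discriminating
one of `N` equiprobable pure states with energy bound `ω`. -/
noncomputable def fsd (N : ℕ) (ω : ℝ) : ℝ :=
  (1 / (N : ℝ)) * (Real.sqrt (ω * ((N : ℝ) - 1)) + Real.sqrt (1 - ω)) ^ 2

lemma inner_concave : ConcaveOn ℝ (Set.Icc (0 : ℝ) 1) (fun ω : ℝ => ω * (1 - ω)) := by
  have h : ConcaveOn ℝ (Set.Icc (0 : ℝ) 1) (fun ω : ℝ => ω + -(ω ^ 2)) := by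
    exact (concaveOn_id (convex_Icc 0 1)).add
      (((even_two.convexOn_pow).subset (Set.subset_univ _) (convex_Icc 0 1)).neg)
  exact h.congr (fun x _ => by ring)

lemma sqrt_inner_concave :
    ConcaveOn ℝ (Set.Icc (0 : ℝ) 1) (fun ω : ℝ => Real.sqrt (ω * (1 - ω))) := by
  have hsq := Real.strictConcaveOn_sqrt.concaveOn
  refine ⟨convex_Icc 0 1, fun x hx y hy a b ha hb hab => ?_⟩
  have hx0 : (0:ℝ) ≤ x * (1 - x) := mul_nonneg hx.1 (by linarith [hx.2])
  have hy0 : (0:ℝ) ≤ y * (1 - y) := mul_nonneg hy.1 (by linarith [hy.2])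
  have h1 : a • Real.sqrt (x * (1 - x)) + b • Real.sqrt (y * (1 - y)) ≤
      Real.sqrt (a • (x * (1 - x)) + b • (y * (1 - y))) :=
    hsq.2 hx0 hy0 ha hb hab
  have h2 : a • (x * (1 - x)) + b • (y * (1 - y)) ≤
      (a • x + b • y) * (1 - (a • x + b • y)) :=
    inner_concave.2 hx hy ha hb hab
  exact h1.trans (Real.sqrt_le_sqrt h2)

theorem fsd_concaveOn (N : ℕ) (hN : 2 ≤ N) :
    -- the alternative expanded form of f_N on [0,1]
    (∀ ω ∈ Set.Icc (0 : ℝ) 1,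
      fsd N ω = (1 / (N : ℝ)) *
        (1 + ((N : ℝ) - 2) * ω + 2 * Real.sqrt (ω * (1 - ω) * ((N : ℝ) - 1)))) ∧
    -- concavity on [0,1]
    ConcaveOn ℝ (Set.Icc (0 : ℝ) 1) (fsd N) := by
  have hN1 : (1:ℝ) ≤ (N:ℝ) := by exact_mod_cast Nat.one_le_of_lt hN
  have heq : ∀ ω ∈ Set.Icc (0 : ℝ) 1,
      fsd N ω = (1 / (N : ℝ)) *
        (1 + ((N : ℝ) - 2) * ω + 2 * Real.sqrt (ω * (1 - ω) * ((N : ℝ) - 1))) := by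
    intro ω hω
    obtain ⟨h0, h1⟩ := hω
    have hA : (0:ℝ) ≤ ω * ((N:ℝ) - 1) := mul_nonneg h0 (by linarith)
    have hB : (0:ℝ) ≤ 1 - ω := by linarith
    have hsqA : Real.sqrt (ω * ((N:ℝ) - 1)) ^ 2 = ω * ((N:ℝ) - 1) := Real.sq_sqrt hA
    have hsqB : Real.sqrt (1 - ω) ^ 2 = 1 - ω := Real.sq_sqrt hB
    have hmul : Real.sqrt (ω * ((N:ℝ) - 1)) * Real.sqrt (1 - ω) =
        Real.sqrt (ω * (1 - ω) * ((N:ℝ) - 1)) := by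
      rw [← Real.sqrt_mul hA]; ring_nf
    unfold fsd
    rw [add_sq, hsqA, hsqB]
    rw [mul_assoc _ (Real.sqrt (ω * ((N:ℝ) - 1)))] at *
    rw [hmul]
    ring
  refine ⟨heq, ?_⟩
  have hg : ConcaveOn ℝ (Set.Icc (0 : ℝ) 1) (fun ω : ℝ =>
      (1 / (N : ℝ)) * (1 + ((N : ℝ) - 2) * ω + 2 * Real.sqrt (ω * (1 - ω) * ((N : ℝ) - 1)))) := by
    have hlin : ConcaveOn ℝ (Set.Icc (0 : ℝ) 1)
        (fun ω : ℝ => 1 + ((N : ℝ) - 2) * ω) := by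
      apply ConcaveOn.add (concaveOn_const _ (convex_Icc 0 1))
      exact (LinearMap.lsmul ℝ ℝ ((N : ℝ) - 2)).concaveOn (convex_Icc 0 1)
    have hroot : ConcaveOn ℝ (Set.Icc (0 : ℝ) 1)
        (fun ω : ℝ => 2 * Real.sqrt (ω * (1 - ω) * ((N : ℝ) - 1))) := by
      have := (sqrt_inner_concave.smul (c := 2 * Real.sqrt ((N : ℝ) - 1)) (by positivity))
      refine this.congr fun x hx => ?_
      have hx0 : (0:ℝ) ≤ x * (1 - x) := mul_nonneg hx.1 (by linarith [hx.2])
      rw [Real.sqrt_mul hx0]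
      simp [smul_eq_mul]; ring
    exact ((hlin.add hroot).smul (c := 1 / (N:ℝ)) (by positivity))
  exact hg.congr (fun x hx => (heq x hx).symm)
end

section
/- Let N ≥ 2 be an integer and let f_N(ω) := (1/N)·(√(ω(N−1)) + √(1−ω))². Let Λ be a finite index set, q : Λ → ℝ≥0 with Σ_λ q_λ = 1, and let p, ωv : Λ → ℝ with ωv_λ ∈ [0,1] and p_λ ≤ f_N(ωv_λ) for every λ. Then Σ_λ q_λ · p_λ ≤ f_N(Σ_λ q_λ · ωv_λ). In other words, any success probability obtained by a shared-randomness mixture of energy-restricted pure-state strategies, with average energy ω = Σ_λ q_λ ωv_λ, is also achievable (is bounded by the same curve) by a single strategy at energy ω: the set of energy-restricted state-discrimination success probabilities is closed under shared randomness. -/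
open Finset

theorem ConcaveOn.sqrt {s : Set ℝ} {f : ℝ → ℝ} (hf : ConcaveOn ℝ s f)
    (hf₀ : ∀ x ∈ s, 0 ≤ f x) : ConcaveOn ℝ s fun x => √(f x) := by
  refine ⟨hf.1, fun x hx y hy a b ha hb hab => ?_⟩
  calc a • √(f x) + b • √(f y)
      ≤ √(a • f x + b • f y) :=
        Real.strictConcaveOn_sqrt.concaveOn.2 (hf₀ x hx) (hf₀ y hy) ha hb hab
    _ ≤ √(f (a • x + b • y)) := Real.sqrt_le_sqrt (hf.2 hx hy ha hb hab)

theorem concaveOn_sqrt_mul_one_sub :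
    ConcaveOn ℝ (Set.Icc 0 1) fun ω : ℝ => √(ω * (1 - ω)) := by
  have hquad : ConcaveOn ℝ (Set.Icc 0 1) fun ω : ℝ => ω * (1 - ω) :=
    ((concaveOn_id (convex_Icc 0 1)).sub
      ((Even.convexOn_pow even_two).subset (Set.subset_univ _) (convex_Icc 0 1))).congr
      fun ω _ => by simp only [Pi.sub_apply, id]; ring
  exact hquad.sqrt fun ω hω => mul_nonneg hω.1 (sub_nonneg.2 hω.2)

theorem fsd_eq_of_mem_Icc (N : ℕ) {ω : ℝ} (hω : ω ∈ Set.Icc (0 : ℝ) 1) :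
    fsd N ω = (N : ℝ)⁻¹ * (1 + ((N : ℝ) - 2) * ω
      + 2 * √((N : ℝ) - 1) * √(ω * (1 - ω))) := by
  rcases N.eq_zero_or_pos with rfl | hN
  · simp [fsd] -- both sides carry the factor `(0 : ℝ)⁻¹ = 0`
  have hN₁ : (0 : ℝ) ≤ (N : ℝ) - 1 := by
    have : (1 : ℝ) ≤ N := by exact_mod_cast hN
    linarith
  have h1ω : 0 ≤ 1 - ω := sub_nonneg.2 hω.2
  have hcross : √(ω * ((N : ℝ) - 1)) * √(1 - ω) = √((N : ℝ) - 1) * √(ω * (1 - ω)) := by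
    rw [Real.sqrt_mul hω.1, Real.sqrt_mul hω.1]
    ring
  rw [fsd, add_sq, Real.sq_sqrt (mul_nonneg hω.1 hN₁), Real.sq_sqrt h1ω, mul_assoc 2, hcross]
  ring

theorem concaveOn_fsd (N : ℕ) : ConcaveOn ℝ (Set.Icc 0 1) (fsd N) := by
  have hcoef : (0 : ℝ) ≤ 2 * √((N : ℝ) - 1) := by positivity
  have hbracket :=
    ((LinearMap.mulLeft ℝ ((N : ℝ) - 2)).concaveOn (convex_Icc 0 1)).add_const 1
      |>.add (concaveOn_sqrt_mul_one_sub.smul hcoef)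
  exact (hbracket.smul (inv_nonneg.2 (Nat.cast_nonneg N))).congr fun ω hω => by
    rw [fsd_eq_of_mem_Icc N hω]
    simp only [Pi.add_apply, LinearMap.mulLeft_apply, smul_eq_mul]
    ring

theorem success_probabilities_closed_under_shared_randomness_general
    (N : ℕ)
    (Λ : Type) [Fintype Λ] (q : Λ → ℝ) (hq : ∀ l, 0 ≤ q l) (hq1 : ∑ l, q l = 1)
    (p ωv : Λ → ℝ) (hωv : ∀ l, ωv l ∈ Set.Icc (0 : ℝ) 1)
    (hp : ∀ l, p l ≤ fsd N (ωv l)) :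
    ∑ l, q l * p l ≤ fsd N (∑ l, q l * ωv l) :=
  calc ∑ l, q l * p l
      ≤ ∑ l, q l • fsd N (ωv l) :=
        sum_le_sum fun l _ => mul_le_mul_of_nonneg_left (hp l) (hq l)
    _ ≤ fsd N (∑ l, q l • ωv l) :=
        (concaveOn_fsd N).le_map_sum (fun l _ => hq l) hq1 fun l _ => hωv l

theorem success_probabilities_closed_under_shared_randomness
    (N : ℕ) (hN : 2 ≤ N)
    (Λ : Type) [Fintype Λ] (q : Λ → ℝ) (hq : ∀ l, 0 ≤ q l) (hq1 : ∑ l, q l = 1)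
    (p ωv : Λ → ℝ) (hωv : ∀ l, ωv l ∈ Set.Icc (0 : ℝ) 1)
    (hp : ∀ l, p l ≤ fsd N (ωv l)) :
    ∑ l, q l * p l ≤ fsd N (∑ l, q l * ωv l) :=
  success_probabilities_closed_under_shared_randomness_general N Λ q hq hq1 p ωv hωv hp
end
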